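/- Let A ∈ ℝ^{n×n} be exponentially stable, let C ∈ ℝ^{p×n}, let B_i, B_j ∈ ℝ^n, let D_i, D_j ∈ ℝ^p, and let t₀ ∈ ℕ. Let y_i, y_j : ℕ → ℝ^p be the state-space impulse-response signals with data (A, B_i, C, D_i) and (A, B_j, C, D_j) respectively, both with activation time t₀. Then ∑_{t=0}^∞ y_i(t) · y_j(t) = D_iᵀ D_j + B_iᵀ P₀ B_j, where P₀ = ∑_{t=0}^∞ (A^t)ᵀ Cᵀ C A^t is the observability Gramian and · denotes the Euclidean inner product in ℝ^p. -/

import Mathlib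

open Matrix

attribute [local instance] Matrix.normedAddCommGroup

/-- `A` is exponentially stable: `‖A^t‖ ≤ c·r^t` for some `c ≥ 0` and `r ∈ [0,1)`. -/
def ExpStable {n : ℕ} (A : Matrix (Fin n) (Fin n) ℝ) : Prop :=
  ∃ (c r : ℝ), 0 ≤ c ∧ 0 ≤ r ∧ r < 1 ∧ ∀ t : ℕ, ‖A ^ t‖ ≤ c * r ^ t

/-- State-space impulse-response signal with data `(A, B, C, D)` and activation time `t₀`:
`y t = 0` for `t < t₀`, `y t₀ = D`, and `y t = C A^(t-t₀-1) B` for `t > t₀`. -/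
noncomputable def ssImpulse {n p : ℕ} (A : Matrix (Fin n) (Fin n) ℝ) (B : Fin n → ℝ)
    (C : Matrix (Fin p) (Fin n) ℝ) (D : Fin p → ℝ) (t₀ : ℕ) :
    ℕ → EuclideanSpace ℝ (Fin p) :=
  fun t => if t < t₀ then 0 else if t = t₀ then WithLp.toLp 2 D else WithLp.toLp 2 (C *ᵥ ((A ^ (t - t₀ - 1)) *ᵥ B))

/-!
The summand vanishes before `t₀`, equals `Dᵢ ⬝ᵥ Dⱼ` at `t₀`, and at time `t₀ + 1 + s` it is
`Bᵢ ⬝ᵥ ((A ^ s)ᵀ Cᵀ C A ^ s) Bⱼ`, the image of the `s`-th term of the Gramian series under the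
continuous functional `X ↦ Bᵢ ⬝ᵥ X Bⱼ`. The Gramian series converges because its terms are a
bounded bilinear expression in `A ^ t = O(rᵗ)`, hence `O(r²ᵗ)`.
-/

attribute [local instance] Matrix.normedSpace

open Asymptotics Filter

theorem hasSum_of_eq_zero_of_lt {G : Type*} [AddCommGroup G] [TopologicalSpace G]
    [IsTopologicalAddGroup G] {f : ℕ → G} {t₀ : ℕ} (hf : ∀ t < t₀, f t = 0) {a : G}
    (h : HasSum (fun s => f (s + (t₀ + 1))) a) : HasSum f (f t₀ + a) := by
  rw [← hasSum_nat_add_iff' (t₀ + 1), Finset.sum_range_succ,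
    Finset.sum_eq_zero fun t ht => hf t (Finset.mem_range.mp ht)]
  simpa using h

theorem ContinuousLinearMap.summable_apply₂_of_isBigO {𝕜 E F G : Type*}
    [NontriviallyNormedField 𝕜] [SeminormedAddCommGroup E] [NormedSpace 𝕜 E]
    [SeminormedAddCommGroup F] [NormedSpace 𝕜 F] [SeminormedAddCommGroup G] [NormedSpace 𝕜 G]
    [CompleteSpace G] (Φ : E →L[𝕜] F →L[𝕜] G) {u : ℕ → E} {v : ℕ → F} {r : ℝ}
    (hr₀ : 0 ≤ r) (hr₁ : r < 1) (hu : u =O[atTop] (r ^ ·)) (hv : v =O[atTop] (r ^ ·)) :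
    Summable fun t => Φ (u t) (v t) := by
  refine summable_of_isBigO_nat (summable_geometric_of_lt_one (pow_nonneg hr₀ 2)
    (pow_lt_one₀ hr₀ hr₁ two_ne_zero)) ?_
  have := Φ.isBoundedBilinearMap.isBigO_comp.trans (hu.norm_left.mul hv.norm_left)
  simpa [← mul_pow, sq] using this

theorem HasSum.dotProduct_mulVec {ι m n R : Type*} [Fintype m] [Fintype n]
    [NonUnitalNonAssocSemiring R] [TopologicalSpace R] [IsTopologicalSemiring R]
    {f : ι → Matrix m n R} {P : Matrix m n R} (h : HasSum f P) (u : m → R) (v : n → R) :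
    HasSum (fun t => u ⬝ᵥ (f t *ᵥ v)) (u ⬝ᵥ (P *ᵥ v)) :=
  let φ : Matrix m n R →+ R :=
    { toFun X := u ⬝ᵥ (X *ᵥ v)
      map_zero' := by simp
      map_add' X Y := by rw [add_mulVec, dotProduct_add] }
  h.map φ (continuous_const.dotProduct (continuous_id.matrix_mulVec continuous_const))

theorem Matrix.summable_transpose_mul_mul_of_isBigO {m n : Type*} [Fintype m] [Fintype n]
    (K : Matrix m m ℝ) {u v : ℕ → Matrix m n ℝ} {r : ℝ} (hr₀ : 0 ≤ r) (hr₁ : r < 1)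
    (hu : u =O[atTop] (r ^ ·)) (hv : v =O[atTop] (r ^ ·)) :
    Summable fun t => (u t)ᵀ * K * v t := by
  let Φ : Matrix m n ℝ →ₗ[ℝ] Matrix m n ℝ →ₗ[ℝ] Matrix n n ℝ :=
    LinearMap.mk₂ ℝ (fun X Y => Xᵀ * K * Y) (by simp [Matrix.add_mul]) (by simp)
      (by simp [Matrix.mul_add]) (by simp)
  exact Φ.toContinuousBilinearMap.summable_apply₂_of_isBigO hr₀ hr₁ hu hv

theorem ExpStable.exists_isBigO_pow {n : ℕ} {A : Matrix (Fin n) (Fin n) ℝ} (hA : ExpStable A) :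
    ∃ r : ℝ, 0 ≤ r ∧ r < 1 ∧ (fun t => A ^ t) =O[atTop] (r ^ ·) := by
  obtain ⟨c, r, -, hr₀, hr₁, hA⟩ := hA
  refine ⟨r, hr₀, hr₁, IsBigO.of_bound c (Eventually.of_forall fun t => ?_)⟩
  rw [Real.norm_of_nonneg (pow_nonneg hr₀ t)]
  exact hA t

theorem ExpStable.summable_gramian {n p : ℕ} {A : Matrix (Fin n) (Fin n) ℝ} (hA : ExpStable A)
    (C : Matrix (Fin p) (Fin n) ℝ) : Summable fun t => (A ^ t)ᵀ * Cᵀ * C * A ^ t := by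
  obtain ⟨r, hr₀, hr₁, hpow⟩ := hA.exists_isBigO_pow
  simpa only [Matrix.mul_assoc] using
    (Cᵀ * C).summable_transpose_mul_mul_of_isBigO hr₀ hr₁ hpow hpow

theorem Matrix.mulVec_dotProduct_mulVec {m n R : Type*} [Fintype m] [Fintype n] [CommSemiring R]
    (M : Matrix m n R) (u v : n → R) : (M *ᵥ u) ⬝ᵥ (M *ᵥ v) = u ⬝ᵥ ((Mᵀ * M) *ᵥ v) := by
  rw [← mulVec_mulVec, dotProduct_mulVec u Mᵀ, vecMul_transpose]

theorem EuclideanSpace.real_inner_toLp_toLp {ι : Type*} [Fintype ι] (x y : ι → ℝ) :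
    inner ℝ (WithLp.toLp 2 x) (WithLp.toLp 2 y) = x ⬝ᵥ y := by
  rw [inner_toLp_toLp, star_trivial, dotProduct_comm]

section ssImpulse

variable {n p : ℕ} (A : Matrix (Fin n) (Fin n) ℝ) (C : Matrix (Fin p) (Fin n) ℝ) {t₀ : ℕ}

theorem ssImpulse_of_lt (B : Fin n → ℝ) (D : Fin p → ℝ) {t : ℕ} (ht : t < t₀) :
    ssImpulse A B C D t₀ t = 0 :=
  if_pos ht

theorem inner_ssImpulse_self (Bi Bj : Fin n → ℝ) (Di Dj : Fin p → ℝ) :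
    inner ℝ (ssImpulse A Bi C Di t₀ t₀) (ssImpulse A Bj C Dj t₀ t₀) = Di ⬝ᵥ Dj := by
  simp only [ssImpulse, lt_irrefl, if_false, if_true, EuclideanSpace.real_inner_toLp_toLp]

theorem ssImpulse_add_succ (B : Fin n → ℝ) (D : Fin p → ℝ) (s : ℕ) :
    ssImpulse A B C D t₀ (s + (t₀ + 1)) = WithLp.toLp 2 (C *ᵥ (A ^ s *ᵥ B)) := by
  rw [ssImpulse, if_neg (by omega), if_neg (by omega), show s + (t₀ + 1) - t₀ - 1 = s by omega]

theorem inner_ssImpulse_add_succ (Bi Bj : Fin n → ℝ) (Di Dj : Fin p → ℝ) (s : ℕ) :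
    inner ℝ (ssImpulse A Bi C Di t₀ (s + (t₀ + 1))) (ssImpulse A Bj C Dj t₀ (s + (t₀ + 1))) =
      Bi ⬝ᵥ (((A ^ s)ᵀ * Cᵀ * C * A ^ s) *ᵥ Bj) := by
  rw [ssImpulse_add_succ, ssImpulse_add_succ, EuclideanSpace.real_inner_toLp_toLp,
    mulVec_mulVec, mulVec_mulVec, mulVec_dotProduct_mulVec, transpose_mul]
  simp only [Matrix.mul_assoc]

end ssImpulse

theorem cross_term_same_activation_time (n p : ℕ)
    (A : Matrix (Fin n) (Fin n) ℝ) (hA : ExpStable A)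
    (C : Matrix (Fin p) (Fin n) ℝ)
    (Bi Bj : Fin n → ℝ) (Di Dj : Fin p → ℝ) (t₀ : ℕ)
    (P₀ : Matrix (Fin n) (Fin n) ℝ)
    (hP₀ : P₀ = ∑' t : ℕ, (A ^ t)ᵀ * Cᵀ * C * A ^ t) :
    (∑' t : ℕ, (inner ℝ (ssImpulse A Bi C Di t₀ t) (ssImpulse A Bj C Dj t₀ t) : ℝ)) =
      Di ⬝ᵥ Dj + Bi ⬝ᵥ (P₀ *ᵥ Bj) := by
  have hgramian : HasSum (fun t => (A ^ t)ᵀ * Cᵀ * C * A ^ t) P₀ := by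
    rw [hP₀]
    exact (hA.summable_gramian C).hasSum
  have htail := hgramian.dotProduct_mulVec Bi Bj
  simp only [← inner_ssImpulse_add_succ A C (t₀ := t₀) Bi Bj Di Dj] at htail
  have hvanish : ∀ t < t₀,
      inner ℝ (ssImpulse A Bi C Di t₀ t) (ssImpulse A Bj C Dj t₀ t) = (0 : ℝ) := fun t ht => by
    rw [ssImpulse_of_lt A C Bi Di ht, inner_zero_left]
  rw [(hasSum_of_eq_zero_of_lt hvanish htail).tsum_eq, inner_ssImpulse_self]
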